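/- (Sup-norm Bellman residual bound for Peng's Q(λ) with behavior policy updates.) Fix λ ∈ [0,1] and α ∈ [1−λ, 1]. Let μ_{−1} be an arbitrary policy and Q_0 : X → A → ℝ arbitrary. For each k ≥ 0, let π_k be any policy greedy with respect to Q_k, set μ_k := α π_k + (1−α) μ_{k−1}, and define Q_{k+1} := N_λ^{μ_k,π_k} Q_k + ε_k for arbitrary error functions ε_k : X → A → ℝ. Write ρ_l := λμ_l + (1−λ)π_l, b_l := Q_l − T^{ρ_l} Q_l, and β := γ(1−λ)/(1−γλ). Then for every k ≥ 0, b_k ≤ (β^k ‖b_0‖∞ + (1+γ)·∑_{l=0}^{k−1} β^{k−l−1} ‖ε_l‖∞)·𝟙 pointwise. -/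

import Mathlib

open scoped BigOperators

namespace RLPQL

variable {X A : Type*} [Fintype X] [Fintype A]

/-- `P` is a transition kernel: nonnegative and rows sum to one. -/
def IsKernel (P : X → A → X → ℝ) : Prop :=
  (∀ x a y, 0 ≤ P x a y) ∧ ∀ x a, ∑ y, P x a y = 1

/-- `π` is a (Markov) policy: nonnegative and sums to one over actions. -/
def IsPolicy (π : X → A → ℝ) : Prop :=
  (∀ x a, 0 ≤ π x a) ∧ ∀ x, ∑ a, π x a = 1

/-- `(πQ)(x) = ∑_a π x a * Q x a`. -/
def polQ (π Q : X → A → ℝ) : X → ℝ := fun x => ∑ a, π x a * Q x a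

/-- `(PV)(x,a) = ∑_y P x a y * V y`. -/
def PV (P : X → A → X → ℝ) (V : X → ℝ) : X → A → ℝ := fun x a => ∑ y, P x a y * V y

/-- `P^π Q = P (π Q)`. -/
def Ppol (P : X → A → X → ℝ) (π Q : X → A → ℝ) : X → A → ℝ := PV P (polQ π Q)

/-- Bellman operator `T^π Q = r + γ P^π Q`. -/
def bellman (P : X → A → X → ℝ) (r : X → A → ℝ) (γ : ℝ) (π Q : X → A → ℝ) : X → A → ℝ :=
  fun x a => r x a + γ * Ppol P π Q x a

/-- Bellman optimality operator `(T Q)(x,a) = r x a + γ ∑_y P x a y * max_b Q y b`. -/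
noncomputable def optBellman (P : X → A → X → ℝ) (r : X → A → ℝ) (γ : ℝ) (Q : X → A → ℝ) :
    X → A → ℝ :=
  fun x a => r x a + γ * ∑ y, P x a y * (⨆ b, Q y b)

/-- `π` is greedy with respect to `Q`. -/
def IsGreedy (π Q : X → A → ℝ) : Prop := ∀ x, polQ π Q x = ⨆ a, Q x a

/-- `(I - c P^μ)⁻¹ f = ∑_{t=0}^∞ c^t (P^μ)^t f`. -/
noncomputable def resolvent (P : X → A → X → ℝ) (c : ℝ) (μ : X → A → ℝ) (f : X → A → ℝ) :
    X → A → ℝ :=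
  fun x a => ∑' t : ℕ, c ^ t * ((Ppol P μ)^[t] f) x a

/-- Peng's Q(λ) operator `N_λ^{μ,π} Q = (I - γλ P^μ)⁻¹ (r + γ(1-λ) P^π Q)`. -/
noncomputable def peng (P : X → A → X → ℝ) (r : X → A → ℝ) (γ lam : ℝ) (μ π Q : X → A → ℝ) :
    X → A → ℝ :=
  resolvent P (γ * lam) μ (fun x a => r x a + γ * (1 - lam) * Ppol P π Q x a)

/-- The mixture policy `c·μ + (1-c)·π`. -/
def mixP (c : ℝ) (μ π : X → A → ℝ) : X → A → ℝ := fun x a => c * μ x a + (1 - c) * π x a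

end RLPQL

open RLPQL

/-!
With `ρ = λμ + (1-λ)π`, `b = Q - T^ρ Q` and `β = γ(1-λ)/(1-γλ)`, Peng's operator satisfies
`Q - N Q = (I - γλP^μ)⁻¹ b` and `N Q - T^ρ (N Q) = γ(1-λ) P^π (Q - N Q)`; as `P^μ` and `P^π` are
averaging operators, `b ≤ C` gives `N Q - T^ρ (N Q) ≤ β C`. The error `ε_k` adds at most
`(1+γ)‖ε_k‖`, and passing from `ρ_k` to `ρ_{k+1}` can only lower the residual, because `π_{k+1}`
is greedy for `Q_{k+1}` and `α ≥ 0`, so that `ρ_{k+1} Q_{k+1} ≥ ρ_k Q_{k+1}`. Unrolling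
`B_{k+1} = β B_k + (1+γ)‖ε_k‖` gives the bound.
-/

namespace RLPQL

variable {X A : Type*}

lemma sum_mul_le_of_le {ι : Type*} [Fintype ι] {w f : ι → ℝ} {C : ℝ}
    (hw : ∀ i, 0 ≤ w i) (hw1 : ∑ i, w i = 1) (h : ∀ i, f i ≤ C) : ∑ i, w i * f i ≤ C :=
  calc ∑ i, w i * f i ≤ ∑ i, w i * C :=
        Finset.sum_le_sum fun i _ => mul_le_mul_of_nonneg_left (h i) (hw i)
    _ = C := by rw [← Finset.sum_mul, hw1, one_mul]

lemma pow_mul_add_mul_sum_range_succ {R : Type*} [CommSemiring R] (β a d : R) (e : ℕ → R)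
    (k : ℕ) :
    β ^ (k + 1) * a + d * ∑ l ∈ Finset.range (k + 1), β ^ (k + 1 - l - 1) * e l
      = β * (β ^ k * a + d * ∑ l ∈ Finset.range k, β ^ (k - l - 1) * e l) + d * e k := by
  have hsum : ∑ l ∈ Finset.range k, β ^ (k + 1 - l - 1) * e l
      = β * ∑ l ∈ Finset.range k, β ^ (k - l - 1) * e l := by
    rw [Finset.mul_sum]
    refine Finset.sum_congr rfl fun l hl => ?_
    rw [show k + 1 - l - 1 = k - l - 1 + 1 by have := Finset.mem_range.1 hl; omega, pow_succ]
    ring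
  rw [Finset.sum_range_succ, hsum, show k + 1 - k - 1 = 0 by omega, pow_zero, pow_succ]
  ring

section Policy

variable [Fintype A]

lemma IsPolicy.mixP {μ π : X → A → ℝ} {c : ℝ} (hμ : IsPolicy μ) (hc0 : 0 ≤ c) (hc1 : c ≤ 1)
    (hπ : IsPolicy π) : IsPolicy (mixP c μ π) := by
  refine ⟨fun x a => ?_, fun x => ?_⟩
  · exact add_nonneg (mul_nonneg hc0 (hμ.1 x a)) (mul_nonneg (by linarith) (hπ.1 x a))
  · simp only [RLPQL.mixP, Finset.sum_add_distrib, ← Finset.mul_sum, hμ.2 x, hπ.2 x]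
    ring

lemma polQ_mixP (c : ℝ) (μ π Q : X → A → ℝ) :
    polQ (mixP c μ π) Q = c • polQ μ Q + (1 - c) • polQ π Q := by
  ext x
  simp only [polQ, mixP, Pi.add_apply, Pi.smul_apply, smul_eq_mul, add_mul,
    Finset.sum_add_distrib, Finset.mul_sum, mul_assoc]

lemma polQ_le_iSup {ν : X → A → ℝ} (hν : IsPolicy ν) (Q : X → A → ℝ) :
    polQ ν Q ≤ fun x => ⨆ a, Q x a := fun x =>
  sum_mul_le_of_le (hν.1 x) (hν.2 x) fun a => le_ciSup (Set.finite_range _).bddAbove a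

lemma polQ_mixP_le_polQ_mixP_of_isGreedy {μ π π' Q : X → A → ℝ} {lam α : ℝ}
    (hμ : IsPolicy μ) (hπ : IsPolicy π) (hπ' : IsGreedy π' Q) (hα : 0 ≤ α) (hlam0 : 0 ≤ lam)
    (hlam1 : lam ≤ 1) : polQ (mixP lam μ π) Q ≤ polQ (mixP lam (mixP α π' μ) π') Q := fun x => by
  have hμQ := polQ_le_iSup hμ Q x
  have hπQ := polQ_le_iSup hπ Q x
  simp only [polQ_mixP, Pi.add_apply, Pi.smul_apply, smul_eq_mul, hπ' x]
  nlinarith [mul_nonneg (mul_nonneg hlam0 hα) (sub_nonneg.2 hμQ),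
    mul_nonneg (sub_nonneg.2 hlam1) (sub_nonneg.2 hπQ)]

end Policy

section Kernel

variable [Fintype X] {P : X → A → X → ℝ}

lemma PV_mono (hP : IsKernel P) {V W : X → ℝ} (h : V ≤ W) : PV P V ≤ PV P W := fun x a =>
  Finset.sum_le_sum fun y _ => mul_le_mul_of_nonneg_left (h y) (hP.1 x a y)

variable [Fintype A] {μ π : X → A → ℝ}

lemma le_const_norm (f : X → A → ℝ) : f ≤ fun _ _ => ‖f‖ := fun x a =>
  (Real.le_norm_self _).trans ((norm_le_pi_norm (f x) a).trans (norm_le_pi_norm f x))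

lemma Ppol_le_const (hP : IsKernel P) (hμ : IsPolicy μ) {f : X → A → ℝ} {C : ℝ}
    (h : f ≤ fun _ _ => C) : Ppol P μ f ≤ fun _ _ => C := fun x a =>
  sum_mul_le_of_le (hP.1 x a) (hP.2 x a) fun y => sum_mul_le_of_le (hμ.1 y) (hμ.2 y) (h y)

variable (P μ) in
noncomputable def markovOp : (X → A → ℝ) →L[ℝ] (X → A → ℝ) :=
  LinearMap.toContinuousLinearMap
    { toFun := Ppol P μ
      map_add' := fun f g => by
        ext x a
        simp only [Ppol, PV, polQ, Pi.add_apply, mul_add, Finset.sum_add_distrib]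
      map_smul' := fun c f => by
        ext x a
        simp only [Ppol, PV, polQ, Pi.smul_apply, smul_eq_mul, RingHom.id_apply, Finset.mul_sum]
        exact Finset.sum_congr rfl fun y _ => Finset.sum_congr rfl fun b _ => by ring }

@[simp]
lemma coe_markovOp : ⇑(markovOp P μ) = Ppol P μ := rfl

lemma iterate_Ppol_le_const (hP : IsKernel P) (hμ : IsPolicy μ) {f : X → A → ℝ} {C : ℝ}
    (h : f ≤ fun _ _ => C) (n : ℕ) : (Ppol P μ)^[n] f ≤ fun _ _ => C := by
  induction n with
  | zero => exact h
  | succ n ih => rw [Function.iterate_succ_apply']; exact Ppol_le_const hP hμ ih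

lemma norm_markovOp_le_one (hP : IsKernel P) (hμ : IsPolicy μ) : ‖markovOp P μ‖ ≤ 1 := by
  refine ContinuousLinearMap.opNorm_le_bound _ zero_le_one fun f => ?_
  rw [one_mul]
  refine pi_norm_le_iff_of_nonneg (norm_nonneg f) |>.2 fun x => ?_
  refine pi_norm_le_iff_of_nonneg (norm_nonneg f) |>.2 fun a => ?_
  have hneg : -Ppol P μ f = Ppol P μ (-f) := by simp only [← coe_markovOp, map_neg]
  rw [Real.norm_eq_abs, abs_le]
  constructor
  · have := Ppol_le_const hP hμ (le_const_norm (-f)) x a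
    rw [← hneg, norm_neg] at this
    exact neg_le.1 this
  · exact Ppol_le_const hP hμ (le_const_norm f) x a

lemma norm_Ppol_le (hP : IsKernel P) (hμ : IsPolicy μ) (f : X → A → ℝ) :
    ‖Ppol P μ f‖ ≤ ‖f‖ :=
  (markovOp P μ).le_of_opNorm_le (norm_markovOp_le_one hP hμ) f |>.trans_eq (one_mul _)

lemma Ppol_mixP (c : ℝ) (μ π Q : X → A → ℝ) :
    Ppol P (mixP c μ π) Q = c • Ppol P μ Q + (1 - c) • Ppol P π Q := by
  ext x a
  simp only [Ppol, PV, polQ_mixP, Pi.add_apply, Pi.smul_apply, smul_eq_mul, mul_add,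
    Finset.sum_add_distrib, Finset.mul_sum]
  congr 1 <;> exact Finset.sum_congr rfl fun y _ => by ring

section Resolvent

variable {c : ℝ}

lemma norm_smul_markovOp_lt_one (hP : IsKernel P) (hμ : IsPolicy μ) (hc0 : 0 ≤ c)
    (hc1 : c < 1) : ‖c • markovOp P μ‖ < 1 :=
  calc ‖c • markovOp P μ‖ ≤ c * 1 := by
        rw [norm_smul, Real.norm_of_nonneg hc0]
        exact mul_le_mul_of_nonneg_left (norm_markovOp_le_one hP hμ) hc0
    _ < 1 := by linarith

lemma hasSum_geom_series_markovOp_apply (hP : IsKernel P) (hμ : IsPolicy μ) (hc0 : 0 ≤ c) (hc1 : c < 1)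
    (f : X → A → ℝ) (x : X) (a : A) :
    HasSum (fun n => c ^ n * ((Ppol P μ)^[n] f) x a)
      ((∑' n, (c • markovOp P μ) ^ n) f x a) := by
  have hS := (summable_geometric_of_norm_lt_one
    (norm_smul_markovOp_lt_one hP hμ hc0 hc1)).hasSum.mapL (ContinuousLinearMap.apply ℝ _ f)
  convert Pi.hasSum.1 (Pi.hasSum.1 hS x) a using 2 with n
  · simp [smul_pow]
  · rfl

lemma resolvent_eq_tsum_pow (hP : IsKernel P) (hμ : IsPolicy μ) (hc0 : 0 ≤ c) (hc1 : c < 1) :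
    resolvent P c μ = ⇑(∑' n, (c • markovOp P μ) ^ n) := by
  ext f x a
  exact (hasSum_geom_series_markovOp_apply hP hμ hc0 hc1 f x a).tsum_eq

lemma resolvent_le_const (hP : IsKernel P) (hμ : IsPolicy μ) (hc0 : 0 ≤ c) (hc1 : c < 1)
    {f : X → A → ℝ} {C : ℝ} (h : f ≤ fun _ _ => C) :
    resolvent P c μ f ≤ fun _ _ => C / (1 - c) := fun x a => by
  rw [resolvent_eq_tsum_pow hP hμ hc0 hc1, ← inv_mul_eq_div]
  exact hasSum_le
    (fun n => mul_le_mul_of_nonneg_left (iterate_Ppol_le_const hP hμ h n x a) (pow_nonneg hc0 n))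
    (hasSum_geom_series_markovOp_apply hP hμ hc0 hc1 f x a) ((hasSum_geometric_of_lt_one hc0 hc1).mul_right C)

lemma resolvent_sub (hP : IsKernel P) (hμ : IsPolicy μ) (hc0 : 0 ≤ c) (hc1 : c < 1)
    (f g : X → A → ℝ) : resolvent P c μ (f - g) = resolvent P c μ f - resolvent P c μ g := by
  rw [resolvent_eq_tsum_pow hP hμ hc0 hc1]
  exact map_sub _ f g

lemma resolvent_sub_smul_Ppol (hP : IsKernel P) (hμ : IsPolicy μ) (hc0 : 0 ≤ c) (hc1 : c < 1)
    (h : X → A → ℝ) : resolvent P c μ (h - c • Ppol P μ h) = h := by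
  have := congrArg (· h) (geom_series_mul_neg _ (norm_smul_markovOp_lt_one hP hμ hc0 hc1))
  simpa [resolvent_eq_tsum_pow hP hμ hc0 hc1] using this

lemma resolvent_eq_add (hP : IsKernel P) (hμ : IsPolicy μ) (hc0 : 0 ≤ c) (hc1 : c < 1)
    (f : X → A → ℝ) : resolvent P c μ f = f + c • Ppol P μ (resolvent P c μ f) := by
  have := congrArg (· f) (mul_neg_geom_series _ (norm_smul_markovOp_lt_one hP hμ hc0 hc1))
  simp only [mul_apply_eq_comp, sub_apply, one_apply_eq_self, smul_apply, coe_markovOp] at this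
  rw [resolvent_eq_tsum_pow hP hμ hc0 hc1]
  exact sub_eq_iff_eq_add.1 this

end Resolvent

variable {r : X → A → ℝ} {γ : ℝ}

lemma bellman_eq (ρ Q : X → A → ℝ) : bellman P r γ ρ Q = r + γ • Ppol P ρ Q := rfl

lemma bellman_le_bellman (hP : IsKernel P) (hγ0 : 0 ≤ γ) {ρ ρ' Q : X → A → ℝ}
    (h : polQ ρ Q ≤ polQ ρ' Q) : bellman P r γ ρ Q ≤ bellman P r γ ρ' Q := fun x a =>
  add_le_add_right (mul_le_mul_of_nonneg_left (PV_mono hP h x a) hγ0) _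

lemma add_sub_bellman_add_le (hP : IsKernel P) {ρ : X → A → ℝ} (hρ : IsPolicy ρ) (hγ0 : 0 ≤ γ)
    {Q : X → A → ℝ} {C : ℝ} (h : Q - bellman P r γ ρ Q ≤ fun _ _ => C) (ε : X → A → ℝ) :
    (Q + ε) - bellman P r γ ρ (Q + ε) ≤ fun _ _ => C + (1 + γ) * ‖ε‖ := by
  have hsplit : (Q + ε) - bellman P r γ ρ (Q + ε)
      = (Q - bellman P r γ ρ Q) + (ε - γ • Ppol P ρ ε) := by
    simp only [bellman_eq, ← coe_markovOp, map_add]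
    module
  intro x a
  have hPε : -Ppol P ρ ε x a ≤ ‖ε‖ :=
    (le_const_norm (-Ppol P ρ ε) x a).trans ((norm_neg _).trans_le (norm_Ppol_le hP hρ ε))
  have hQ : Q x a - bellman P r γ ρ Q x a ≤ C := h x a
  rw [hsplit]
  simp only [Pi.add_apply, Pi.sub_apply, Pi.smul_apply, smul_eq_mul]
  linarith [mul_le_mul_of_nonneg_left hPε hγ0, le_const_norm ε x a]

section Peng

variable {lam : ℝ}

lemma peng_eq (Q : X → A → ℝ) :
    peng P r γ lam μ π Q = resolvent P (γ * lam) μ (r + (γ * (1 - lam)) • Ppol P π Q) := rfl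

lemma sub_peng_eq_resolvent (hP : IsKernel P) (hμ : IsPolicy μ) (hc0 : 0 ≤ γ * lam)
    (hc1 : γ * lam < 1) (Q : X → A → ℝ) :
    Q - peng P r γ lam μ π Q
      = resolvent P (γ * lam) μ (Q - bellman P r γ (mixP lam μ π) Q) := by
  have hb : Q - bellman P r γ (mixP lam μ π) Q
      = (Q - (γ * lam) • Ppol P μ Q) - (r + (γ * (1 - lam)) • Ppol P π Q) := by
    rw [bellman_eq, Ppol_mixP]
    module
  rw [hb, resolvent_sub hP hμ hc0 hc1, resolvent_sub_smul_Ppol hP hμ hc0 hc1, peng_eq]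

lemma peng_sub_bellman_peng (hP : IsKernel P) (hμ : IsPolicy μ) (hc0 : 0 ≤ γ * lam)
    (hc1 : γ * lam < 1) (Q : X → A → ℝ) :
    peng P r γ lam μ π Q - bellman P r γ (mixP lam μ π) (peng P r γ lam μ π Q)
      = (γ * (1 - lam)) • Ppol P π (Q - peng P r γ lam μ π Q) := by
  set N := peng P r γ lam μ π Q
  have hN : N = (r + (γ * (1 - lam)) • Ppol P π Q) + (γ * lam) • Ppol P μ N :=
    resolvent_eq_add hP hμ hc0 hc1 _
  rw [bellman_eq, Ppol_mixP]
  simp only [← coe_markovOp, map_sub] at hN ⊢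
  linear_combination (norm := module) hN

lemma peng_sub_bellman_peng_le (hP : IsKernel P) (hμ : IsPolicy μ) (hπ : IsPolicy π)
    (hγ0 : 0 ≤ γ) (hγ1 : γ < 1) (hlam0 : 0 ≤ lam) (hlam1 : lam ≤ 1) {Q : X → A → ℝ} {C : ℝ}
    (h : Q - bellman P r γ (mixP lam μ π) Q ≤ fun _ _ => C) :
    peng P r γ lam μ π Q - bellman P r γ (mixP lam μ π) (peng P r γ lam μ π Q)
      ≤ fun _ _ => γ * (1 - lam) / (1 - γ * lam) * C := by
  have hc0 : 0 ≤ γ * lam := mul_nonneg hγ0 hlam0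
  have hc1 : γ * lam < 1 := (mul_le_of_le_one_right hγ0 hlam1).trans_lt hγ1
  have hD : Q - peng P r γ lam μ π Q ≤ fun _ _ => C / (1 - γ * lam) := by
    rw [sub_peng_eq_resolvent hP hμ hc0 hc1]
    exact resolvent_le_const hP hμ hc0 hc1 h
  rw [peng_sub_bellman_peng hP hμ hc0 hc1]
  intro x a
  calc (γ * (1 - lam)) * Ppol P π (Q - peng P r γ lam μ π Q) x a
      ≤ γ * (1 - lam) * (C / (1 - γ * lam)) :=
        mul_le_mul_of_nonneg_left (Ppol_le_const hP hπ hD x a) (mul_nonneg hγ0 (by linarith))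
    _ = γ * (1 - lam) / (1 - γ * lam) * C := by ring

end Peng

end Kernel

end RLPQL

theorem peng_supnorm_residual_bound_policy_updates_general {X A : Type*} [Fintype X] [Fintype A]
    (P : X → A → X → ℝ) (r : X → A → ℝ) (γ lam α : ℝ)
    (hP : IsKernel P) (hγ0 : 0 ≤ γ) (hγ1 : γ < 1) (hlam0 : 0 ≤ lam) (hlam1 : lam ≤ 1)
    (hα0 : 1 - lam ≤ α) (hα1 : α ≤ 1)
    (μinit : X → A → ℝ) (hμinit : IsPolicy μinit)
    (Qseq πseq μseq : ℕ → X → A → ℝ) (ε : ℕ → X → A → ℝ)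
    (hπpol : ∀ k, IsPolicy (πseq k)) (hπgreedy : ∀ k, IsGreedy (πseq k) (Qseq k))
    (hμ0 : μseq 0 = mixP α (πseq 0) μinit)
    (hμs : ∀ k, μseq (k + 1) = mixP α (πseq (k + 1)) (μseq k))
    (hrec : ∀ k, Qseq (k + 1) = peng P r γ lam (μseq k) (πseq k) (Qseq k) + ε k) :
    ∀ k : ℕ,
      Qseq k - bellman P r γ (mixP lam (μseq k) (πseq k)) (Qseq k)
        ≤ fun _ _ =>
            (γ * (1 - lam) / (1 - γ * lam)) ^ k *
              ‖Qseq 0 - bellman P r γ (mixP lam (μseq 0) (πseq 0)) (Qseq 0)‖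
            + (1 + γ) * ∑ l ∈ Finset.range k,
                (γ * (1 - lam) / (1 - γ * lam)) ^ (k - l - 1) * ‖ε l‖ := by
  have hα : 0 ≤ α := by linarith
  have hμpol : ∀ k, IsPolicy (μseq k) := by
    intro k
    induction k with
    | zero => rw [hμ0]; exact (hπpol 0).mixP hα hα1 hμinit
    | succ k ih => rw [hμs k]; exact (hπpol (k + 1)).mixP hα hα1 ih
  intro k
  induction k with
  | zero =>
    simp only [pow_zero, one_mul, Finset.range_zero, Finset.sum_empty, mul_zero, add_zero]
    exact le_const_norm _
  | succ k ih =>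
    rw [pow_mul_add_mul_sum_range_succ]
    calc Qseq (k + 1) - bellman P r γ (mixP lam (μseq (k + 1)) (πseq (k + 1))) (Qseq (k + 1))
        ≤ Qseq (k + 1) - bellman P r γ (mixP lam (μseq k) (πseq k)) (Qseq (k + 1)) := by
          refine sub_le_sub_left (bellman_le_bellman hP hγ0 ?_) _
          rw [hμs k]
          exact polQ_mixP_le_polQ_mixP_of_isGreedy (hμpol k) (hπpol k) (hπgreedy (k + 1)) hα
            hlam0 hlam1
      _ ≤ _ := by
          rw [hrec k]
          exact add_sub_bellman_add_le hP ((hμpol k).mixP hlam0 hlam1 (hπpol k)) hγ0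
            (peng_sub_bellman_peng_le hP (hμpol k) (hπpol k) hγ0 hγ1 hlam0 hlam1 ih) (ε k)

/-- Sup-norm Bellman residual bound for Peng's Q(λ) with behavior policy
updates: with `b_l := Q_l - T^{ρ_l} Q_l`, `ρ_l = λμ_l+(1-λ)π_l`, `β = γ(1-λ)/(1-γλ)`,
`b_k ≤ (β^k ‖b_0‖∞ + (1+γ) ∑_{l<k} β^{k-l-1} ‖ε_l‖∞)·𝟙` pointwise. -/
theorem peng_supnorm_residual_bound_policy_updates {X A : Type*} [Fintype X] [Fintype A]
    [Nonempty X] [Nonempty A]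
    (P : X → A → X → ℝ) (r : X → A → ℝ) (γ lam α : ℝ)
    (hP : IsKernel P) (hγ0 : 0 ≤ γ) (hγ1 : γ < 1) (hlam0 : 0 ≤ lam) (hlam1 : lam ≤ 1)
    (hα0 : 1 - lam ≤ α) (hα1 : α ≤ 1)
    (μinit : X → A → ℝ) (hμinit : IsPolicy μinit)
    (Qseq πseq μseq : ℕ → X → A → ℝ) (ε : ℕ → X → A → ℝ)
    (hπpol : ∀ k, IsPolicy (πseq k)) (hπgreedy : ∀ k, IsGreedy (πseq k) (Qseq k))
    (hμ0 : μseq 0 = mixP α (πseq 0) μinit)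
    (hμs : ∀ k, μseq (k + 1) = mixP α (πseq (k + 1)) (μseq k))
    (hrec : ∀ k, Qseq (k + 1) = peng P r γ lam (μseq k) (πseq k) (Qseq k) + ε k) :
    ∀ k : ℕ,
      Qseq k - bellman P r γ (mixP lam (μseq k) (πseq k)) (Qseq k)
        ≤ fun _ _ =>
            (γ * (1 - lam) / (1 - γ * lam)) ^ k *
              ‖Qseq 0 - bellman P r γ (mixP lam (μseq 0) (πseq 0)) (Qseq 0)‖
            + (1 + γ) * ∑ l ∈ Finset.range k,
                (γ * (1 - lam) / (1 - γ * lam)) ^ (k - l - 1) * ‖ε l‖ :=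
  peng_supnorm_residual_bound_policy_updates_general P r γ lam α hP hγ0 hγ1 hlam0 hlam1 hα0 hα1
    μinit hμinit Qseq πseq μseq ε hπpol hπgreedy hμ0 hμs hrec
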